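/- Under Assumption 1, R₀ = R₀', where R₀' = {x₀ ∈ ℝⁿ : there exists δ > 0 such that dist(φ_{x₀}^π(k), Xᶜ) > δ for all k ∈ ℕ and all policies π, and there exists a function β : ℕ → [0, ∞) with β(k) → 0 as k → ∞ such that ‖φ_{x₀}^π(k)‖ ≤ β(k) for all k ∈ ℕ and all policies π}. -/

import Mathlib

open Metric Set Filter MeasureTheory

noncomputable section

abbrev St (n : ℕ) := EuclideanSpace ℝ (Fin n)

/-- Trajectory of the perturbed discrete-time system. -/
def traj {n m : ℕ} (f : St n → St m → St n) (x₀ : St n) (π : ℕ → St m) : ℕ → St n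
  | 0 => x₀
  | k + 1 => f (traj f x₀ π k) (π k)

/-- A perturbation input policy takes values in `D`. -/
def IsPolicy {m : ℕ} (D : Set (St m)) (π : ℕ → St m) : Prop := ∀ k, π k ∈ D

/-- Maximal robust region of attraction. -/
def RoA {n m : ℕ} (f : St n → St m → St n) (D : Set (St m)) (X : Set (St n)) : Set (St n) :=
  {x₀ | ∀ π, IsPolicy D π →
    (∀ k, traj f x₀ π k ∈ X) ∧ Tendsto (fun k => traj f x₀ π k) atTop (nhds 0)}

/-- `f` is a polynomial map in `(x, d)`. -/
def IsPolyMap2 {n m : ℕ} (f : St n → St m → St n) : Prop :=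
  ∃ p : Fin n → MvPolynomial (Fin n ⊕ Fin m) ℝ,
    ∀ x d i, f x d i = MvPolynomial.eval (Sum.elim x d) (p i)

/-- A real-valued polynomial function on the state space. -/
def IsPolyFun {n : ℕ} (g : St n → ℝ) : Prop :=
  ∃ p : MvPolynomial (Fin n) ℝ, ∀ x, g x = MvPolynomial.eval x p

/-- Assumption 1: uniform local exponential stability. -/
def Assumption1 {n m : ℕ} (f : St n → St m → St n) (D : Set (St m)) (X : Set (St n)) : Prop :=
  ∃ M r lam : ℝ, 0 < M ∧ 0 < r ∧ 0 < lam ∧ lam < 1 ∧ closedBall (0 : St n) r ⊆ X ∧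
    ∀ x₀ ∈ closedBall (0 : St n) r, ∀ π, IsPolicy D π →
      ∀ k, ‖traj f x₀ π k‖ ≤ lam ^ k * M * ‖x₀‖

/-- Maximal robust region of uniform attraction (with ball radius `ε`). -/
def R0 {n m : ℕ} (f : St n → St m → St n) (D : Set (St m)) (X : Set (St n)) (ε : ℝ) :
    Set (St n) :=
  {x₀ | (∃ δ > 0, ∀ π, IsPolicy D π → ∀ k, δ < infDist (traj f x₀ π k) Xᶜ) ∧
        (∃ K : ℕ, ∀ π, IsPolicy D π →
            ∃ k, 0 < k ∧ k ≤ K ∧ traj f x₀ π k ∈ closedBall (0 : St n) ε)}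

/-- Extended-real logarithm with the convention `ln 0 = -∞`. -/
def elog (t : ℝ) : EReal := if t = 0 then ⊥ else (Real.log t : EReal)

/-- The value function `V`. -/
def Vval {n m nX : ℕ} (f : St n → St m → St n) (D : Set (St m))
    (hX : Fin nX → St n → ℝ) (g : St n → ℝ) (x : St n) : EReal :=
  ⨆ π ∈ {π : ℕ → St m | IsPolicy D π}, ⨆ k : ℕ,
    ((∑ i ∈ Finset.range k, Real.log (g (traj f x π i) + 1) : ℝ) : EReal)
      - ⨅ j : Fin nX, elog (max (1 - hX j (traj f x π k)) 0)

/-- The Kruzhkov transformed value function `v = 1 - e^{-V}` (with `e^{-∞} = 0`). -/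
def vval {n m nX : ℕ} (f : St n → St m → St n) (D : Set (St m))
    (hX : Fin nX → St n → ℝ) (g : St n → ℝ) (x : St n) : ℝ :=
  if Vval f D hX g x = ⊤ then 1 else 1 - Real.exp (-(Vval f D hX g x).toReal)

/-- `w` is a (bounded continuous) solution of the Bellman equation. -/
def IsBellmanSolution {n m nX : ℕ} (f : St n → St m → St n) (D : Set (St m))
    (hX : Fin nX → St n → ℝ) (g : St n → ℝ) (w : St n → ℝ) : Prop :=
  (∀ x, min (sInf {y : ℝ | ∃ d ∈ D, y = w x - w (f x d) - g x * (1 - w x)})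
            (w x - 1 + ⨅ j : Fin nX, max (1 - hX j x) 0) = 0) ∧ w 0 = 0

/-
Once a trajectory is in the ball of radius `ε ≤ r`, Assumption 1 makes it decay like
`lam ^ k * M * ε`. If every trajectory enters that ball by a common time `K`, then, as the
trajectories also stay in the bounded set `X ⊆ closedBall 0 C`, all of them lie below
`lam ^ (k - K) * max C (M * ε)`, a bound that tends to `0` (with truncated subtraction it is
`max C (M * ε)` up to time `K`). Conversely a common bound `β k → 0` falls below `ε` at some
time `N`, and then every trajectory is in the ball at time `N + 1`.
-/

section Trajectories

variable {n m : ℕ} {f : St n → St m → St n} {D : Set (St m)} {π : ℕ → St m}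

lemma traj_add (x₀ : St n) (k₀ j : ℕ) :
    traj f x₀ π (k₀ + j) = traj f (traj f x₀ π k₀) (fun i => π (k₀ + i)) j := by
  induction j with
  | zero => rfl
  | succ j ih => rw [← add_assoc, traj, ih, traj]

lemma IsPolicy.shift (hπ : IsPolicy D π) (k₀ : ℕ) : IsPolicy D (fun i => π (k₀ + i)) :=
  fun i => hπ (k₀ + i)

lemma norm_traj_le_of_mem_closedBall {M r lam ε : ℝ} (hM : 0 ≤ M) (hlam0 : 0 ≤ lam)
    (hlam1 : lam ≤ 1)
    (hstab : ∀ x₀ ∈ closedBall (0 : St n) r, ∀ π, IsPolicy D π →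
      ∀ k, ‖traj f x₀ π k‖ ≤ lam ^ k * M * ‖x₀‖)
    (hεr : ε ≤ r) (hπ : IsPolicy D π) {x₀ : St n} {k₀ K k : ℕ}
    (hk₀ : traj f x₀ π k₀ ∈ closedBall 0 ε) (hk₀K : k₀ ≤ K) (hKk : K ≤ k) :
    ‖traj f x₀ π k‖ ≤ lam ^ (k - K) * (M * ε) := by
  have hε : ‖traj f x₀ π k₀‖ ≤ ε := mem_closedBall_zero_iff.mp hk₀
  have hr : traj f x₀ π k₀ ∈ closedBall 0 r := closedBall_subset_closedBall hεr hk₀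
  calc ‖traj f x₀ π k‖
      = ‖traj f (traj f x₀ π k₀) (fun i => π (k₀ + i)) (k - k₀)‖ := by
        rw [← traj_add, Nat.add_sub_cancel' (hk₀K.trans hKk)]
    _ ≤ lam ^ (k - k₀) * M * ‖traj f x₀ π k₀‖ := hstab _ hr _ (hπ.shift k₀) _
    _ ≤ lam ^ (k - K) * M * ε := by
        gcongr ?_ * _ * ?_
        exact pow_le_pow_of_le_one hlam0 hlam1 (Nat.sub_le_sub_left hk₀K k)
    _ = lam ^ (k - K) * (M * ε) := mul_assoc _ _ _

lemma norm_traj_le_of_hits_closedBall {M r lam ε C : ℝ} (hM : 0 ≤ M) (hlam0 : 0 ≤ lam)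
    (hlam1 : lam ≤ 1)
    (hstab : ∀ x₀ ∈ closedBall (0 : St n) r, ∀ π, IsPolicy D π →
      ∀ k, ‖traj f x₀ π k‖ ≤ lam ^ k * M * ‖x₀‖)
    (hεr : ε ≤ r) (hπ : IsPolicy D π) {x₀ : St n} (hC : ∀ k, traj f x₀ π k ∈ closedBall 0 C)
    {k₀ K : ℕ} (hk₀ : traj f x₀ π k₀ ∈ closedBall 0 ε) (hk₀K : k₀ ≤ K) (k : ℕ) :
    ‖traj f x₀ π k‖ ≤ lam ^ (k - K) * max C (M * ε) := by
  rcases le_total k K with hkK | hKk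
  · rw [Nat.sub_eq_zero_of_le hkK, pow_zero, one_mul]
    exact (mem_closedBall_zero_iff.mp (hC k)).trans (le_max_left _ _)
  · refine (norm_traj_le_of_mem_closedBall hM hlam0 hlam1 hstab hεr hπ hk₀ hk₀K hKk).trans ?_
    gcongr
    exact le_max_right _ _

lemma exists_uniform_hitting_time_of_tendsto {x₀ : St n} {ε : ℝ} {β : ℕ → ℝ} (hε : 0 < ε)
    (hβ : Tendsto β atTop (nhds 0))
    (hbound : ∀ π, IsPolicy D π → ∀ k, ‖traj f x₀ π k‖ ≤ β k) :
    ∃ K : ℕ, ∀ π, IsPolicy D π → ∃ k, 0 < k ∧ k ≤ K ∧ traj f x₀ π k ∈ closedBall 0 ε := by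
  obtain ⟨N, hN⟩ := eventually_atTop.mp (hβ.eventually (gt_mem_nhds hε))
  refine ⟨N + 1, fun π hπ => ⟨N + 1, N.succ_pos, le_rfl, ?_⟩⟩
  exact mem_closedBall_zero_iff.mpr ((hbound π hπ _).trans (hN _ N.le_succ).le)

end Trajectories

lemma tendsto_pow_sub_mul_atTop_nhds_zero {lam : ℝ} (hlam0 : 0 ≤ lam) (hlam1 : lam < 1)
    (K : ℕ) (c : ℝ) : Tendsto (fun k : ℕ => lam ^ (k - K) * c) atTop (nhds 0) := by
  simpa using ((tendsto_pow_atTop_nhds_zero_of_lt_one hlam0 hlam1).comp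
    (tendsto_sub_atTop_nat K)).mul_const c

lemma mem_of_infDist_compl_pos {E : Type*} [PseudoMetricSpace E] {s : Set E} {x : E}
    (h : 0 < infDist x sᶜ) : x ∈ s :=
  notMem_compl_iff.mp fun hx => h.ne' (infDist_zero_of_mem hx)

theorem stmt7_general
    {n m : ℕ}
    (f : St n → St m → St n)
    (D : Set (St m))
    (X : Set (St n))
    (hXbdd : Bornology.IsBounded X)
    (M r lam : ℝ) (hM : 0 < M) (hr : 0 < r) (hlam0 : 0 < lam) (hlam1 : lam < 1)
    (hstab : ∀ x₀ ∈ closedBall (0 : St n) r, ∀ π, IsPolicy D π →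
      ∀ k, ‖traj f x₀ π k‖ ≤ lam ^ k * M * ‖x₀‖)
    :
    R0 f D X (min (r / (2 * M)) (r / 2)) =
      {x₀ | (∃ δ > 0, ∀ π, IsPolicy D π → ∀ k, δ < infDist (traj f x₀ π k) Xᶜ) ∧
            ∃ β : ℕ → ℝ, (∀ k, 0 ≤ β k) ∧ Tendsto β atTop (nhds 0) ∧
              ∀ π, IsPolicy D π → ∀ k, ‖traj f x₀ π k‖ ≤ β k} := by
  set ε := min (r / (2 * M)) (r / 2)
  have hε : 0 < ε := by positivity
  have hεr : ε ≤ r := (min_le_right _ _).trans (half_le_self hr.le)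
  obtain ⟨C, hC⟩ := hXbdd.subset_closedBall 0
  ext x₀
  constructor
  · rintro ⟨hδ, K, hK⟩
    refine ⟨hδ, fun k => lam ^ (k - K) * max C (M * ε), fun k => by positivity,
      tendsto_pow_sub_mul_atTop_nhds_zero hlam0.le hlam1 K _, fun π hπ k => ?_⟩
    obtain ⟨δ, hδ0, hδX⟩ := hδ
    obtain ⟨k₀, -, hk₀K, hk₀⟩ := hK π hπ
    exact norm_traj_le_of_hits_closedBall hM.le hlam0.le hlam1.le hstab hεr hπ
      (fun k => hC (mem_of_infDist_compl_pos (hδ0.trans (hδX π hπ k)))) hk₀ hk₀K k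
  · rintro ⟨hδ, β, -, hβ, hbound⟩
    exact ⟨hδ, exists_uniform_hitting_time_of_tendsto hε hβ hbound⟩

theorem stmt7
    {n m nX : ℕ} (hnX : 0 < nX)
    (f : St n → St m → St n) (hfpoly : IsPolyMap2 f)
    (D : Set (St m)) (hD : IsCompact D)
    (hf0 : ∀ d ∈ D, f 0 d = 0)
    (hX : Fin nX → St n → ℝ) (hXpoly : ∀ j, IsPolyFun (hX j))
    (hX0 : ∀ j, hX j 0 = 0) (hXpos : ∀ j, ∀ x : St n, x ≠ 0 → 0 < hX j x)
    (X : Set (St n)) (hXdef : X = {x | ∀ j, hX j x < 1})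
    (hXbdd : Bornology.IsBounded X) (hXopen : IsOpen X)
    (M r lam : ℝ) (hM : 0 < M) (hr : 0 < r) (hlam0 : 0 < lam) (hlam1 : lam < 1)
    (hball : closedBall (0 : St n) r ⊆ X)
    (hstab : ∀ x₀ ∈ closedBall (0 : St n) r, ∀ π, IsPolicy D π →
      ∀ k, ‖traj f x₀ π k‖ ≤ lam ^ k * M * ‖x₀‖)
    :
    R0 f D X (min (r / (2 * M)) (r / 2)) =
      {x₀ | (∃ δ > 0, ∀ π, IsPolicy D π → ∀ k, δ < infDist (traj f x₀ π k) Xᶜ) ∧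
            ∃ β : ℕ → ℝ, (∀ k, 0 ≤ β k) ∧ Tendsto β atTop (nhds 0) ∧
              ∀ π, IsPolicy D π → ∀ k, ‖traj f x₀ π k‖ ≤ β k} :=
  stmt7_general f D X hXbdd M r lam hM hr hlam0 hlam1 hstab
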